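/- The joint distribution of a commitment and a subset-opening witness, in the exponent, is independent of which superset was committed: let F be a finite field, let S₀ and S₁ be nonempty finite subsets of F, let a ∈ F with a ∉ S₀ and a ∉ S₁, and let S′ be a finite set with S′ ⊆ S₀ and S′ ⊆ S₁. Then the pushforward under ρ ↦ (ρ · f_{S₀}(a), ρ · f_{S₀∖S′}(a)) of the uniform distribution on F ∖ {0} equals the pushforward under ρ ↦ (ρ · f_{S₁}(a), ρ · f_{S₁∖S′}(a)) of the uniform distribution on F ∖ {0}. -/

import Mathlib

open Polynomial

private lemma map_mul_uniform {F : Type*} [Field F] [Fintype F] [DecidableEq F]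
    (c : F) (hc : c ≠ 0)
    (h : (1 : F) ∈ Finset.univ.erase (0 : F)) :
    (PMF.uniformOfFinset (Finset.univ.erase (0 : F)) ⟨1, h⟩).map (fun ρ => ρ * c)
      = PMF.uniformOfFinset (Finset.univ.erase (0 : F)) ⟨1, h⟩ := by
  ext b
  rw [PMF.map_apply, tsum_eq_single (b * c⁻¹)]
  · have hb : b = b * c⁻¹ * c := by field_simp
    rw [if_pos hb]
    erw [PMF.uniformOfFinset_apply, PMF.uniformOfFinset_apply]
    simp only [Finset.mem_erase, Finset.mem_univ, and_true]
    have : b * c⁻¹ ≠ 0 ↔ b ≠ 0 := by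
      constructor
      · intro h1 h2; exact h1 (by simp [h2])
      · intro h1 h2
        rcases mul_eq_zero.mp h2 with h3 | h3
        · exact h1 h3
        · exact hc (inv_eq_zero.mp h3)
    simp [this]
  · intro a ha
    rw [if_neg]
    intro hab
    exact ha (by field_simp [hab]; exact hab.symm)

/-- The joint distribution of a commitment and a subset-opening witness, in the
exponent, is independent of which superset was committed. -/
theorem commitment_witness_distribution (F : Type*) [Field F] [Fintype F]
    [DecidableEq F] (S₀ S₁ : Finset F) (hS₀ : S₀.Nonempty) (hS₁ : S₁.Nonempty)
    (a : F) (ha₀ : a ∉ S₀) (ha₁ : a ∉ S₁)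
    (S' : Finset F) (h₀ : S' ⊆ S₀) (h₁ : S' ⊆ S₁) :
    (PMF.uniformOfFinset (Finset.univ.erase (0 : F))
        ⟨1, Finset.mem_erase.mpr ⟨one_ne_zero, Finset.mem_univ 1⟩⟩).map
      (fun ρ => (ρ * (∏ s ∈ S₀, (X - C s)).eval a,
                 ρ * (∏ s ∈ S₀ \ S', (X - C s)).eval a))
      = (PMF.uniformOfFinset (Finset.univ.erase (0 : F))
          ⟨1, Finset.mem_erase.mpr ⟨one_ne_zero, Finset.mem_univ 1⟩⟩).map
        (fun ρ => (ρ * (∏ s ∈ S₁, (X - C s)).eval a,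
                   ρ * (∏ s ∈ S₁ \ S', (X - C s)).eval a)) := by
  set k : F := (∏ s ∈ S', (X - C s)).eval a with hk
  have heval : ∀ (S : Finset F), (∏ s ∈ S, (X - C s)).eval a = ∏ s ∈ S, (a - s) := by
    intro S; simp [eval_prod]
  have hne : ∀ (S : Finset F), a ∉ S → (∏ s ∈ S, (X - C s)).eval a ≠ 0 := by
    intro S hS
    rw [heval]
    exact Finset.prod_ne_zero_iff.mpr (fun s hs => sub_ne_zero.mpr (fun h => hS (h ▸ hs)))
  have hkne : k ≠ 0 := hne S' (fun h => ha₀ (h₀ h))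
  have hfact : ∀ (S : Finset F), S' ⊆ S →
      (∏ s ∈ S, (X - C s)).eval a = (∏ s ∈ S \ S', (X - C s)).eval a * k := by
    intro S hS
    rw [heval, heval, hk, heval, Finset.prod_sdiff hS]
  have key : ∀ (S : Finset F), S' ⊆ S → a ∉ S →
      (PMF.uniformOfFinset (Finset.univ.erase (0 : F))
        ⟨1, Finset.mem_erase.mpr ⟨one_ne_zero, Finset.mem_univ 1⟩⟩).map
      (fun ρ => (ρ * (∏ s ∈ S, (X - C s)).eval a,
                 ρ * (∏ s ∈ S \ S', (X - C s)).eval a))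
      = (PMF.uniformOfFinset (Finset.univ.erase (0 : F))
        ⟨1, Finset.mem_erase.mpr ⟨one_ne_zero, Finset.mem_univ 1⟩⟩).map
        (fun x => (x, x * k⁻¹)) := by
    intro S hS haS
    have hc := hne S haS
    have : (fun ρ => (ρ * (∏ s ∈ S, (X - C s)).eval a,
                 ρ * (∏ s ∈ S \ S', (X - C s)).eval a))
        = (fun x => (x, x * k⁻¹)) ∘ (fun ρ => ρ * (∏ s ∈ S, (X - C s)).eval a) := by
      funext ρ
      simp only [Function.comp_apply, Prod.mk.injEq, true_and]
      rw [hfact S hS]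
      field_simp
    rw [this, ← PMF.map_comp, map_mul_uniform _ hc (Finset.mem_erase.mpr ⟨one_ne_zero, Finset.mem_univ 1⟩)]
  rw [key S₀ h₀ ha₀, key S₁ h₁ ha₁]
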